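/- arXiv:2511.00303 — 5 statements merged into one kernel-verified Lean document; each statement's English description precedes it below -/
import Mathlib

section
/- The map 𝔰 : Λ(N) → 𝒮(N) sending a pair of partitions (μ,ν) with ℓ(μ)+ℓ(ν) ≤ N to the equivalence class [μ + ν̄, ν₁] is a bijection, where ν̄ is the partition obtained by taking the complement of ν in the rectangle with N rows and ν₁ columns and rotating by 180°, and two pairs (α,t),(β,u) ∈ 𝒫(N)×ℕ₀ are equivalent iff αᵢ − βᵢ = t − u for all i = 1,…,N. -/
open scoped BigOperators

/-- A partition with at most N parts, recorded as a weakly decreasing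
function `Fin N → ℕ` (parts padded with zeros). -/
def PartN (N : ℕ) := {α : Fin N → ℕ // Antitone α}

namespace PartN

/-- The number of (nonzero) parts, i.e. the length ℓ(α). -/
def length {N : ℕ} (α : PartN N) : ℕ :=
  (Finset.univ.filter fun i => α.1 i ≠ 0).card

/-- Pointwise sum of partitions. -/
def add {N : ℕ} (α β : PartN N) : PartN N :=
  ⟨fun i => α.1 i + β.1 i, fun _ _ h => add_le_add (α.2 h) (β.2 h)⟩

/-- The complement of ν in the N × ν₁ rectangle, rotated by 180°:
`ν̄ᵢ = ν₁ − ν_{N+1−i}`. -/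
def bar {N : ℕ} (hN : 0 < N) (ν : PartN N) : PartN N :=
  ⟨fun i => ν.1 ⟨0, hN⟩ - ν.1 ⟨N - 1 - i.1, by omega⟩, by
    intro i j hij
    refine Nat.sub_le_sub_left (ν.2 ?_) _
    simp only [Fin.le_def] at *
    omega⟩

end PartN

/-- The set Λ(N): pairs of partitions (μ,ν) with ℓ(μ) + ℓ(ν) ≤ N. -/
def LambdaN (N : ℕ) :=
  {p : PartN N × PartN N // p.1.length + p.2.length ≤ N}

/-- The equivalence relation on 𝒫(N) × ℕ₀: (α,t) ∼ (β,u) iff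
αᵢ − βᵢ = t − u for all i. -/
instance SRel (N : ℕ) : Setoid (PartN N × ℕ) where
  r x y := ∀ i : Fin N, (x.1.1 i : ℤ) - (y.1.1 i : ℤ) = (x.2 : ℤ) - (y.2 : ℤ)
  iseqv := by
    constructor
    · intro x i; ring
    · intro x y h i; have := h i; omega
    · intro x y z h1 h2 i; have := h1 i; have := h2 i; omega

/-- The set 𝒮(N) of equivalence classes. -/
def SN (N : ℕ) := Quotient (SRel N)

/-- The map 𝔰 : Λ(N) → 𝒮(N), (μ,ν) ↦ [μ + ν̄, ν₁]. -/
def frakS (N : ℕ) (hN : 0 < N) (p : LambdaN N) : SN N :=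
  Quotient.mk (SRel N) (p.1.1.add (PartN.bar hN p.1.2), p.1.2.1 ⟨0, hN⟩)


namespace PartN

lemma lt_length {N : ℕ} (α : PartN N) (i : Fin N) (h : α.1 i ≠ 0) :
    i.1 < α.length := by
  have hsub : Finset.Iic i ⊆ Finset.univ.filter fun j => α.1 j ≠ 0 := by
    intro j hj
    simp only [Finset.mem_Iic] at hj
    simp only [Finset.mem_filter, Finset.mem_univ, true_and]
    have := α.2 hj
    omega
  have hc := Finset.card_le_card hsub
  rw [Fin.card_Iic] at hc
  have hl : α.length = (Finset.univ.filter fun j => α.1 j ≠ 0).card := rfl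
  omega

lemma eq_zero_of_length_le {N : ℕ} (α : PartN N) (i : Fin N) (h : α.length ≤ i.1) :
    α.1 i = 0 := by
  by_contra h0
  exact absurd (α.lt_length i h0) (by omega)

end PartN

/-- the map 𝔰 : Λ(N) → 𝒮(N), (μ,ν) ↦ [μ + ν̄, ν₁] is a bijection. -/
theorem frakS_bijective (N : ℕ) (hN : 0 < N) :
    Function.Bijective (frakS N hN) := by
  constructor
  · rintro ⟨⟨μ, ν⟩, hp⟩ ⟨⟨μ', ν'⟩, hq⟩ h
    have h' := Quotient.exact h
    simp only [LambdaN] at hp hq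
    have key : ∀ i : Fin N, (μ.1 i : ℤ) - ν.1 ⟨N - 1 - i.1, by omega⟩ =
        (μ'.1 i : ℤ) - ν'.1 ⟨N - 1 - i.1, by omega⟩ := by
      intro i
      have hi := h' i
      simp only [PartN.add, PartN.bar, frakS] at hi
      have hν : ν.1 ⟨N - 1 - i.1, by omega⟩ ≤ ν.1 ⟨0, hN⟩ :=
        ν.2 (by simp [Fin.le_def])
      have hν' : ν'.1 ⟨N - 1 - i.1, by omega⟩ ≤ ν'.1 ⟨0, hN⟩ :=
        ν'.2 (by simp [Fin.le_def])
      omega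
    have hz : ∀ (σ : PartN N) (τ : PartN N), σ.length + τ.length ≤ N →
        ∀ i j : Fin N, i.1 + j.1 = N - 1 → σ.1 i = 0 ∨ τ.1 j = 0 := by
      intro σ τ hστ i j hij
      by_cases hm : σ.1 i = 0
      · exact Or.inl hm
      · refine Or.inr (τ.eq_zero_of_length_le _ ?_)
        have := σ.lt_length i hm
        omega
    have hμ : μ.1 = μ'.1 := by
      funext i
      have k := key i
      rcases hz μ ν hp i ⟨N - 1 - i.1, by omega⟩ (by simp; omega) with h1 | h1 <;>
        rcases hz μ' ν' hq i ⟨N - 1 - i.1, by omega⟩ (by simp; omega) with h2 | h2 <;>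
        omega
    have hν : ν.1 = ν'.1 := by
      funext j
      have k := key ⟨N - 1 - j.1, by omega⟩
      have e : (⟨N - 1 - (N - 1 - j.1), by omega⟩ : Fin N) = j :=
        Fin.ext (by simp; omega)
      rw [e] at k
      rcases hz μ ν hp ⟨N - 1 - j.1, by omega⟩ j (by simp; omega) with h1 | h1 <;>
        rcases hz μ' ν' hq ⟨N - 1 - j.1, by omega⟩ j (by simp; omega) with h2 | h2 <;>
        omega
    exact Subtype.ext (Prod.ext (Subtype.ext hμ) (Subtype.ext hν))
  · intro q
    induction q using Quotient.ind with
    | _ a =>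
    obtain ⟨α, t⟩ := a
    have hb : ∀ i j : Fin N, i ≤ j → α.1 j ≤ α.1 i := fun i j hij => α.2 hij
    refine ⟨⟨(⟨fun i => α.1 i - t, fun i j hij => Nat.sub_le_sub_right (α.2 hij) t⟩,
      ⟨fun j => t - α.1 ⟨N - 1 - j.1, by omega⟩, fun i j hij =>
        Nat.sub_le_sub_left (α.2 (by simp only [Fin.le_def]; omega)) t⟩), ?_⟩, ?_⟩
    · show (Finset.univ.filter fun i : Fin N => α.1 i - t ≠ 0).card +
        (Finset.univ.filter fun j : Fin N => t - α.1 ⟨N - 1 - j.1, by omega⟩ ≠ 0).card ≤ N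
      have hcard : (Finset.univ.filter fun j : Fin N =>
          t - α.1 ⟨N - 1 - j.1, by omega⟩ ≠ 0).card =
          (Finset.univ.filter fun i : Fin N => α.1 i < t).card := by
        refine Finset.card_bij (fun j _ => ⟨N - 1 - j.1, by omega⟩) ?_ ?_ ?_
        · intro j hj
          simp only [Finset.mem_filter, Finset.mem_univ, true_and] at hj ⊢
          omega
        · intro j1 h1 j2 h2 he
          have := Fin.mk.injEq (N - 1 - j1.1) _ (N - 1 - j2.1) _ ▸ he
          apply Fin.ext
          have : N - 1 - j1.1 = N - 1 - j2.1 := congrArg Fin.val he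
          omega
        · intro i hi
          simp only [Finset.mem_filter, Finset.mem_univ, true_and] at hi
          refine ⟨⟨N - 1 - i.1, by omega⟩, ?_, ?_⟩
          · simp only [Finset.mem_filter, Finset.mem_univ, true_and]
            have e : (⟨N - 1 - (N - 1 - i.1), by omega⟩ : Fin N) = i :=
              Fin.ext (by simp only; omega)
            rw [e]
            omega
          · exact Fin.ext (by simp only; omega)
      rw [hcard]
      have hsub : (Finset.univ.filter fun i : Fin N => α.1 i - t ≠ 0) =
          Finset.univ.filter fun i : Fin N => t < α.1 i := by
        apply Finset.filter_congr
        intro i _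
        simp only [ne_eq, Nat.sub_eq_zero_iff_le, not_le]
      rw [hsub]
      have hdisj : Disjoint (Finset.univ.filter fun i : Fin N => t < α.1 i)
          (Finset.univ.filter fun i : Fin N => α.1 i < t) := by
        rw [Finset.disjoint_filter]
        intro i _ h1
        omega
      calc (Finset.univ.filter fun i : Fin N => t < α.1 i).card +
            (Finset.univ.filter fun i : Fin N => α.1 i < t).card
          = ((Finset.univ.filter fun i : Fin N => t < α.1 i) ∪
            (Finset.univ.filter fun i : Fin N => α.1 i < t)).card :=
            (Finset.card_union_of_disjoint hdisj).symm
        _ ≤ (Finset.univ : Finset (Fin N)).card := Finset.card_le_card (Finset.subset_univ _)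
        _ = N := by simp
    · apply Quotient.sound
      intro i
      simp only [PartN.add, PartN.bar]
      have e : (⟨N - 1 - (N - 1 - i.1), by omega⟩ : Fin N) = i :=
        Fin.ext (by simp only; omega)
      rw [e]
      have hbi : α.1 ⟨N - 1 - 0, by omega⟩ ≤ α.1 i :=
        α.2 (by simp only [Fin.le_def]; omega)
      omega
end

section
/- Let V be an N-dimensional complex vector space and V^{m,n} = V^{⊗m} ⊗ (V*)^{⊗n}. The endomorphism 𝒜_{m,n} = Σ_{a,b'} τ_{ab'}, where τ_{ab'} is insertion-after-contraction of the a-th V factor with the b'-th V* factor, is diagonalizable. -/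
open scoped BigOperators

noncomputable section

/-- Mixed tensors of valence (m,n) on an N-dimensional space, given by components. -/
abbrev Tens (N m n : ℕ) := (Fin m → Fin N) → (Fin n → Fin N) → ℂ

namespace Mixed

variable (N : ℕ)

/-- The contraction (trace) map `tr_{ab'}` contracting the a-th contravariant slot
with the b-th covariant slot. -/
def trMap (m n : ℕ) (a : Fin (m+1)) (b : Fin (n+1)) :
    Tens N (m+1) (n+1) →ₗ[ℂ] Tens N m n where
  toFun t := fun i j => ∑ k : Fin N, t (a.insertNth k i) (b.insertNth k j)
  map_add' t s := by funext i j; simp [Finset.sum_add_distrib]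
  map_smul' c t := by funext i j; simp [Finset.mul_sum]

/-- The insertion map `tr⁺_{ab'}` inserting the canonical invariant `∑ᵢ eᵢ ⊗ eⁱ`
at positions a and b. -/
def insMap (m n : ℕ) (a : Fin (m+1)) (b : Fin (n+1)) :
    Tens N m n →ₗ[ℂ] Tens N (m+1) (n+1) where
  toFun t := fun i j =>
    if i a = j b then t (fun x => i (a.succAbove x)) (fun y => j (b.succAbove y)) else 0
  map_add' t s := by funext i j; by_cases h : i a = j b <;> simp [h]
  map_smul' c t := by funext i j; by_cases h : i a = j b <;> simp [h]

/-- `τ_{ab'} = tr⁺_{ab'} ∘ tr_{ab'}`. -/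
def tau (m n : ℕ) (a : Fin (m+1)) (b : Fin (n+1)) :
    Module.End ℂ (Tens N (m+1) (n+1)) :=
  (insMap N m n a b).comp (trMap N m n a b)

/-- `𝒜_{m,n} = ∑_{a,b'} τ_{ab'}`. -/
def AOp (m n : ℕ) : Module.End ℂ (Tens N (m+1) (n+1)) :=
  ∑ a : Fin (m+1), ∑ b : Fin (n+1), tau N m n a b

/-- The traceless subspace: common kernel of all contractions. -/
def traceless (m n : ℕ) : Submodule ℂ (Tens N (m+1) (n+1)) :=
  ⨅ a : Fin (m+1), ⨅ b : Fin (n+1), LinearMap.ker (trMap N m n a b)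

/-- The span of the images of all insertion maps. -/
def traceSpan (m n : ℕ) : Submodule ℂ (Tens N (m+1) (n+1)) :=
  ⨆ a : Fin (m+1), ⨆ b : Fin (n+1), LinearMap.range (insMap N m n a b)

end Mixed

/-! The standard Hermitian product on components, `⟪s, t⟫ = ∑ conj (s i j) * t i j`, makes each
insertion `tr⁺_{ab'}` the adjoint of the contraction `tr_{ab'}`. Hence every
`τ_{ab'} = tr⁺_{ab'} ∘ tr_{ab'}` is a Gram operator, their sum `𝒜_{m,n}` is self-adjoint, and
the spectral theorem makes its eigenspaces span. -/

open Module End in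
theorem Module.End.eigenspace_conj {R M M' : Type*} [CommRing R] [AddCommGroup M] [Module R M]
    [AddCommGroup M'] [Module R M'] (e : M ≃ₗ[R] M') (f : End R M) (μ : R) :
    eigenspace (e.conj f) μ = (eigenspace f μ).map (e : M →ₗ[R] M') := by
  ext x
  simp only [mem_eigenspace_iff, Submodule.mem_map_equiv, LinearEquiv.conj_apply_apply]
  exact ⟨fun h => by simpa using congrArg e.symm h, fun h => by simpa using congrArg e h⟩

open Module End in
theorem Module.End.iSup_eigenspace_conj_eq_top_iff {R M M' : Type*} [CommRing R] [AddCommGroup M]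
    [Module R M] [AddCommGroup M'] [Module R M'] (e : M ≃ₗ[R] M') (f : End R M) :
    ⨆ μ, eigenspace (e.conj f) μ = ⊤ ↔ ⨆ μ, eigenspace f μ = ⊤ := by
  simp only [eigenspace_conj, ← Submodule.map_iSup]
  exact Submodule.map_eq_top_iff

theorem Fin.sum_pi_eq_sum_sum_insertNth {α M : Type*} [Fintype α] [AddCommMonoid M] {m : ℕ}
    (a : Fin (m + 1)) (F : (Fin (m + 1) → α) → M) :
    ∑ i, F i = ∑ k, ∑ i : Fin m → α, F (a.insertNth k i) := by
  rw [← (Fin.insertNthEquiv (fun _ => α) a).sum_comp F, Fintype.sum_prod_type]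
  rfl

namespace Mixed

variable {N m n : ℕ}

@[simp]
theorem insMap_insertNth (a : Fin (m + 1)) (b : Fin (n + 1)) (s : Tens N m n) (k k' : Fin N)
    (i : Fin m → Fin N) (j : Fin n → Fin N) :
    insMap N m n a b s (a.insertNth k i) (b.insertNth k' j) = if k = k' then s i j else 0 := by
  simp [insMap]

theorem sum_conj_insMap_mul (a : Fin (m + 1)) (b : Fin (n + 1)) (s : Tens N m n)
    (t : Tens N (m + 1) (n + 1)) :
    ∑ i, ∑ j, starRingEnd ℂ (insMap N m n a b s i j) * t i j =
      ∑ i, ∑ j, starRingEnd ℂ (s i j) * trMap N m n a b t i j := by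
  have on_diagonal : ∀ k (i : Fin m → Fin N),
      ∑ k', ∑ j, starRingEnd ℂ (insMap N m n a b s (a.insertNth k i) (b.insertNth k' j)) *
          t (a.insertNth k i) (b.insertNth k' j) =
        ∑ j, starRingEnd ℂ (s i j) * t (a.insertNth k i) (b.insertNth k j) := by
    intro k i
    rw [Finset.sum_comm]
    simp [insMap_insertNth, apply_ite]
  simp only [Fin.sum_pi_eq_sum_sum_insertNth a, Fin.sum_pi_eq_sum_sum_insertNth b, on_diagonal]
  simp only [trMap, LinearMap.coe_mk, AddHom.coe_mk, Finset.mul_sum]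
  rw [Finset.sum_comm]
  exact Finset.sum_congr rfl fun i _ => Finset.sum_comm

variable (N m n) in
def toEuclidean : Tens N m n ≃ₗ[ℂ] EuclideanSpace ℂ ((Fin m → Fin N) × (Fin n → Fin N)) :=
  (LinearEquiv.curry ℂ ℂ _ _).symm.trans (WithLp.linearEquiv 2 ℂ _).symm

theorem inner_toEuclidean (s t : Tens N m n) :
    inner ℂ (toEuclidean N m n s) (toEuclidean N m n t) =
      ∑ i, ∑ j, starRingEnd ℂ (s i j) * t i j := by
  simp [toEuclidean, PiLp.inner_apply, Fintype.sum_prod_type, mul_comm]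

theorem inner_toEuclidean_insMap (a : Fin (m + 1)) (b : Fin (n + 1)) (s : Tens N m n)
    (t : Tens N (m + 1) (n + 1)) :
    inner ℂ (toEuclidean N _ _ (insMap N m n a b s)) (toEuclidean N _ _ t) =
      inner ℂ (toEuclidean N _ _ s) (toEuclidean N _ _ (trMap N m n a b t)) := by
  simp only [inner_toEuclidean, sum_conj_insMap_mul]

theorem isSymmetric_conj_tau (a : Fin (m + 1)) (b : Fin (n + 1)) :
    ((toEuclidean N _ _).conj (tau N m n a b)).IsSymmetric := by
  set trE := (toEuclidean N _ _).arrowCongr (toEuclidean N m n) (trMap N m n a b)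
  have insMap_eq_adjoint : (toEuclidean N _ _).arrowCongr (toEuclidean N _ _) (insMap N m n a b) =
      LinearMap.adjoint trE := by
    rw [LinearMap.eq_adjoint_iff]
    intro x y
    simpa [trE] using inner_toEuclidean_insMap a b ((toEuclidean N _ _).symm x)
      ((toEuclidean N _ _).symm y)
  rw [tau, LinearEquiv.conj, LinearEquiv.arrowCongr_comp _ (toEuclidean N m n), insMap_eq_adjoint]
  exact LinearMap.isSymmetric_adjoint_comp_self trE

theorem isSymmetric_conj_AOp : ((toEuclidean N _ _).conj (AOp N m n)).IsSymmetric := by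
  rw [AOp, map_sum]
  exact LinearMap.isSymmetric_sum _ fun a _ => by
    rw [map_sum]
    exact LinearMap.isSymmetric_sum _ fun b _ => isSymmetric_conj_tau a b

end Mixed

/-- The paper's `𝒜_{m,n}` with `m, n ≥ 1` is `Mixed.AOp N (m - 1) (n - 1)`. -/
theorem Amn_diagonalizable (N m n : ℕ) :
    (⨆ μ : ℂ, Module.End.eigenspace (Mixed.AOp N m n) μ) = ⊤ := by
  rw [← Module.End.iSup_eigenspace_conj_eq_top_iff (Mixed.toEuclidean N _ _),
    ← Submodule.orthogonal_eq_bot_iff]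
  exact Mixed.isSymmetric_conj_AOp.orthogonalComplement_iSup_eigenspaces_eq_bot
end
end

section
/- Every eigenvalue of the endomorphism 𝒜_{m,n} of V^{m,n} is a nonnegative real number. -/
open scoped BigOperators

noncomputable section

namespace Mixed

variable (N : ℕ)

/-- Hermitian inner product on component tensors. -/
def ip {m n : ℕ} (t s : Tens N m n) : ℂ :=
  ∑ i : Fin m → Fin N, ∑ j : Fin n → Fin N, (starRingEnd ℂ) (t i j) * s i j

lemma sum_insertNth {m : ℕ} (a : Fin (m+1)) (F : (Fin (m+1) → Fin N) → ℂ) :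
    ∑ i : Fin (m+1) → Fin N, F i
      = ∑ k : Fin N, ∑ i : Fin m → Fin N, F (a.insertNth k i) := by
  have := Fintype.sum_equiv (Fin.insertNthEquiv (fun _ => Fin N) a)
    (fun p => F (a.insertNth p.1 p.2)) F (fun p => by simp [Fin.insertNthEquiv])
  rw [← this, Fintype.sum_prod_type]

lemma sum_sum_ite {α : Type*} [Fintype α] (k : Fin N) (f : Fin N → α → ℂ) :
    ∑ k' : Fin N, ∑ j : α, (if k = k' then f k' j else 0) = ∑ j : α, f k j := by
  rw [Finset.sum_comm]; simp

/-- `insMap` is the adjoint of `trMap` with respect to `ip`. -/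
lemma ip_ins {m n : ℕ} (a : Fin (m+1)) (b : Fin (n+1)) (t : Tens N (m+1) (n+1)) (u : Tens N m n) :
    ip N t (insMap N m n a b u) = ip N (trMap N m n a b t) u := by
  unfold ip insMap trMap
  simp only [LinearMap.coe_mk, AddHom.coe_mk]
  rw [sum_insertNth N a]
  simp only [sum_insertNth N b, Fin.insertNth_apply_same, Fin.insertNth_apply_succAbove,
    mul_ite, mul_zero, sum_sum_ite, map_sum, Finset.sum_mul]
  rw [Finset.sum_comm]
  exact Finset.sum_congr rfl fun i _ => Finset.sum_comm

lemma ip_self {m n : ℕ} (t : Tens N m n) :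
    ip N t t = ((∑ i : Fin m → Fin N, ∑ j : Fin n → Fin N, Complex.normSq (t i j) : ℝ) : ℂ) := by
  unfold ip
  push_cast
  refine Finset.sum_congr rfl fun i _ => Finset.sum_congr rfl fun j _ => ?_
  rw [mul_comm, Complex.mul_conj]

lemma ip_smul {m n : ℕ} (c : ℂ) (t s : Tens N m n) :
    ip N t (c • s) = c * ip N t s := by
  unfold ip
  simp [Finset.mul_sum, mul_left_comm]

lemma ip_sum {m n : ℕ} {ι : Type*} (s : Finset ι) (t : Tens N m n) (f : ι → Tens N m n) :
    ip N t (∑ x ∈ s, f x) = ∑ x ∈ s, ip N t (f x) := by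
  unfold ip
  have hpt : ∀ i j, (∑ x ∈ s, f x) i j = ∑ x ∈ s, f x i j := by
    intro i j
    rw [Finset.sum_apply, Finset.sum_apply]
  simp only [hpt, Finset.mul_sum]
  conv_rhs => rw [Finset.sum_comm]
  exact Finset.sum_congr rfl fun i _ => Finset.sum_comm

end Mixed

/-- every eigenvalue of 𝒜_{m,n} is a nonnegative real number. -/
theorem Amn_eigenvalues_nonneg (N m n : ℕ) (μ : ℂ)
    (h : Module.End.HasEigenvalue (Mixed.AOp N m n) μ) :
    μ.im = 0 ∧ 0 ≤ μ.re := by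
  obtain ⟨v, hv⟩ := h.exists_hasEigenvector
  obtain ⟨hAv, hv0⟩ := hv
  rw [Module.End.mem_eigenspace_iff] at hAv
  -- the squared norm of v
  set r : ℝ := ∑ i : Fin (m+1) → Fin N, ∑ j : Fin (n+1) → Fin N, Complex.normSq (v i j) with hr
  have hrpos : 0 < r := by
    have hne : ∃ i j, v i j ≠ 0 := by
      by_contra hc
      push_neg at hc
      exact hv0 (funext fun i => funext fun j => hc i j)
    obtain ⟨i0, j0, hij⟩ := hne
    have hle : Complex.normSq (v i0 j0) ≤ r := by
      rw [hr]
      calc Complex.normSq (v i0 j0)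
          ≤ ∑ j : Fin (n+1) → Fin N, Complex.normSq (v i0 j) :=
            Finset.single_le_sum (fun j _ => Complex.normSq_nonneg _) (Finset.mem_univ j0)
        _ ≤ _ := Finset.single_le_sum
            (fun i _ => Finset.sum_nonneg fun j _ => Complex.normSq_nonneg _)
            (Finset.mem_univ i0)
    exact lt_of_lt_of_le (Complex.normSq_pos.2 hij) hle
  -- the quantity ⟨v, A v⟩ is a nonnegative real
  set c : ℝ := ∑ a : Fin (m+1), ∑ b : Fin (n+1),
      ∑ i : Fin m → Fin N, ∑ j : Fin n → Fin N,
        Complex.normSq (Mixed.trMap N m n a b v i j) with hc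
  have hcnn : 0 ≤ c :=
    Finset.sum_nonneg fun a _ => Finset.sum_nonneg fun b _ =>
      Finset.sum_nonneg fun i _ => Finset.sum_nonneg fun j _ => Complex.normSq_nonneg _
  have key : μ * (r : ℂ) = (c : ℂ) := by
    have h1 : Mixed.ip N v (Mixed.AOp N m n v) = μ * (r : ℂ) := by
      rw [hAv, Mixed.ip_smul, Mixed.ip_self]
    have h2 : Mixed.ip N v (Mixed.AOp N m n v) = (c : ℂ) := by
      have : Mixed.AOp N m n v
          = ∑ a : Fin (m+1), ∑ b : Fin (n+1), Mixed.tau N m n a b v := by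
        simp [Mixed.AOp, LinearMap.sum_apply]
      rw [this]
      rw [Mixed.ip_sum]
      rw [hc]
      push_cast
      refine Finset.sum_congr rfl fun a _ => ?_
      rw [Mixed.ip_sum]
      refine Finset.sum_congr rfl fun b _ => ?_
      rw [Mixed.tau, LinearMap.comp_apply, Mixed.ip_ins, Mixed.ip_self]
      push_cast
      rfl
    rw [← h1, h2]
  have hr0 : (r : ℂ) ≠ 0 := by exact_mod_cast hrpos.ne'
  have hμ : μ = ((c / r : ℝ) : ℂ) := by
    rw [Complex.ofReal_div, eq_div_iff hr0]
    exact key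
  constructor
  · rw [hμ]; exact Complex.ofReal_im _
  · rw [hμ, Complex.ofReal_re]
    exact div_nonneg hcnn hrpos.le
end
end

section
/- For dim V = N ≥ 2, the spectrum of 𝒜_{2,1} = τ_{11'} + τ_{21'} acting on V ⊗ V ⊗ V* is {0, N−1, N+1}, and consequently 𝒫_{2,1} = (1 − 𝒜_{2,1}/(N−1))(1 − 𝒜_{2,1}/(N+1)) is the projector onto the subspace of tensors T with both partial traces tr_{11'}(T) = 0 and tr_{21'}(T) = 0. -/
open scoped BigOperators

noncomputable section

/-! The contraction-insertions `e = τ_{11'}` and `f = τ_{21'}` satisfy the Temperley–Lieb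
relations `e² = N e`, `f² = N f`, `efe = e`, `fef = f`. In any algebra these give
`e P = f P = 0` for `P = (1 - A/(N-1))(1 - A/(N+1))` and `A = e + f`. Hence `A P = 0`, so `P` is
idempotent, the spectrum of `A` lies among the roots of `X (1 - X/(N-1)) (1 - X/(N+1))`, and
`range P = ker e ⊓ ker f`. The eigenvalues `N ± 1` are attained on `e ± f e`, and `0` on `P`
itself, which is nonzero because a nonzero traceless tensor exists once `N ≥ 2`. -/

structure IsTemperleyLiebPair {K R : Type*} [Field K] [Ring R] [Algebra K R]
    (n : K) (e f : R) : Prop where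
  mul_self_left : e * e = n • e
  mul_self_right : f * f = n • f
  mul_mul_left : e * f * e = e
  mul_mul_right : f * e * f = f

def tlProjector {K R : Type*} [Field K] [Ring R] [Algebra K R] (n : K) (a : R) : R :=
  (1 - (n - 1)⁻¹ • a) * (1 - (n + 1)⁻¹ • a)

section Algebra

variable {K R : Type*} [Field K] [Ring R] [Algebra K R]

theorem mem_spectrum_of_mul_eq_smul {a x : R} {μ : K} (hx : x ≠ 0) (h : a * x = μ • x) :
    μ ∈ spectrum K a := by
  rw [spectrum.mem_iff]
  intro hu
  apply hx
  apply hu.mul_right_eq_zero.mp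
  rw [sub_mul, h, Algebra.algebraMap_eq_smul_one, smul_mul_assoc, one_mul, sub_self]

theorem spectrum_zero_subset : spectrum K (0 : R) ⊆ {0} := by
  intro μ hμ
  by_contra h
  exact spectrum.mem_iff.mp hμ (by simpa using (IsUnit.mk0 μ h).map (algebraMap K R))

theorem tlProjector_mul_of_mul_eq_zero {n : K} {a x : R} (hx : a * x = 0) :
    tlProjector n a * x = x := by
  simp only [tlProjector, mul_assoc, sub_mul, one_mul, smul_mul_assoc, hx, smul_zero, sub_zero]

namespace IsTemperleyLiebPair

variable {n : K} {e f : R}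

theorem symm (h : IsTemperleyLiebPair n e f) : IsTemperleyLiebPair n f e :=
  ⟨h.mul_self_right, h.mul_self_left, h.mul_mul_right, h.mul_mul_left⟩

theorem mul_tlProjector (h : IsTemperleyLiebPair n e f) (h₁ : n - 1 ≠ 0) (h₂ : n + 1 ≠ 0) :
    e * tlProjector n (e + f) = 0 := by
  simp only [tlProjector, mul_sub, sub_mul, mul_add, add_mul, mul_one, one_mul, smul_mul_assoc,
    mul_smul_comm, ← mul_assoc, h.mul_self_left, h.mul_self_right, h.mul_mul_left, smul_add,
    smul_smul]
  match_scalars <;> field_simp <;> ring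


theorem add_mul_tlProjector (h : IsTemperleyLiebPair n e f) (h₁ : n - 1 ≠ 0) (h₂ : n + 1 ≠ 0) :
    (e + f) * tlProjector n (e + f) = 0 := by
  rw [add_mul, h.mul_tlProjector h₁ h₂, zero_add, add_comm, h.symm.mul_tlProjector h₁ h₂]

theorem isIdempotentElem_tlProjector (h : IsTemperleyLiebPair n e f) (h₁ : n - 1 ≠ 0)
    (h₂ : n + 1 ≠ 0) : IsIdempotentElem (tlProjector n (e + f)) :=
  tlProjector_mul_of_mul_eq_zero (h.add_mul_tlProjector h₁ h₂)

theorem mul_add_mul_self (h : IsTemperleyLiebPair n e f) (s : K) :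
    e * (e + s • (f * e)) = (n + s) • e := by
  rw [mul_add, h.mul_self_left, mul_smul_comm, ← mul_assoc, h.mul_mul_left, add_smul]

theorem add_mul_add_mul_self (h : IsTemperleyLiebPair n e f) {s : K} (hs : s * s = 1) :
    (e + f) * (e + s • (f * e)) = (n + s) • (e + s • (f * e)) := by
  simp only [add_mul, mul_add, mul_smul_comm, ← mul_assoc, h.mul_self_left, h.mul_self_right,
    h.mul_mul_left, smul_mul_assoc]
  match_scalars
  · ring
  · linear_combination -hs

open Polynomial in
theorem spectrum_add_subset (h : IsTemperleyLiebPair n e f) (h₁ : n - 1 ≠ 0) (h₂ : n + 1 ≠ 0) :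
    spectrum K (e + f) ⊆ {0, n - 1, n + 1} := by
  intro μ hμ
  have hp := spectrum.subset_polynomial_aeval (e + f)
    (X * (1 - C (n - 1)⁻¹ * X) * (1 - C (n + 1)⁻¹ * X)) ⟨μ, hμ, rfl⟩
  simp only [map_mul, map_sub, map_one, aeval_X, aeval_C, mul_assoc, ← Algebra.smul_def] at hp
  have hroot := spectrum_zero_subset (h.add_mul_tlProjector h₁ h₂ ▸ hp)
  simp only [eval_mul, eval_sub, eval_one, eval_C, eval_X, Set.mem_singleton_iff, mul_eq_zero,
    sub_eq_zero] at hroot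
  simp only [Set.mem_insert_iff, Set.mem_singleton_iff]
  rcases hroot with hμ | hμ | hμ
  · exact Or.inl hμ
  · right; left; field_simp at hμ; linear_combination -hμ
  · right; right; field_simp at hμ; linear_combination -hμ


theorem add_mem_spectrum [NoZeroSMulDivisors K R] (h : IsTemperleyLiebPair n e f) (he : e ≠ 0)
    {s : K} (hs : s * s = 1) (hns : n + s ≠ 0) : n + s ∈ spectrum K (e + f) := by
  refine mem_spectrum_of_mul_eq_smul (fun h0 => he ?_) (h.add_mul_add_mul_self hs)
  have := h.mul_add_mul_self s
  rw [h0, mul_zero, eq_comm, smul_eq_zero] at this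
  exact this.resolve_left hns

theorem spectrum_add (h : IsTemperleyLiebPair n e f) [NoZeroSMulDivisors K R] (he : e ≠ 0)
    (hP : tlProjector n (e + f) ≠ 0) (h₁ : n - 1 ≠ 0) (h₂ : n + 1 ≠ 0) :
    spectrum K (e + f) = {0, n - 1, n + 1} := by
  refine (h.spectrum_add_subset h₁ h₂).antisymm ?_
  rintro μ (rfl | rfl | rfl)
  · exact mem_spectrum_of_mul_eq_smul hP (by rw [zero_smul, h.add_mul_tlProjector h₁ h₂])
  · rw [sub_eq_add_neg] at h₁ ⊢
    exact h.add_mem_spectrum he (by norm_num) h₁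
  · exact h.add_mem_spectrum he (by norm_num) h₂

end IsTemperleyLiebPair
end Algebra

section Module

variable {K M : Type*} [Field K] [AddCommGroup M] [Module K M] {n : K} {e f : Module.End K M}

theorem tlProjector_apply_of_apply_eq_zero {a : Module.End K M} {x : M} (hx : a x = 0) :
    tlProjector n a x = x := by
  simp [tlProjector, hx]

theorem IsTemperleyLiebPair.range_tlProjector (h : IsTemperleyLiebPair n e f) (h₁ : n - 1 ≠ 0)
    (h₂ : n + 1 ≠ 0) :
    LinearMap.range (tlProjector n (e + f)) = LinearMap.ker e ⊓ LinearMap.ker f := by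
  refine le_antisymm ?_ fun x ⟨hex, hfx⟩ => ⟨x, tlProjector_apply_of_apply_eq_zero ?_⟩
  · rintro _ ⟨x, rfl⟩
    have hf := h.symm.mul_tlProjector h₁ h₂
    rw [add_comm] at hf
    exact ⟨LinearMap.congr_fun (h.mul_tlProjector h₁ h₂) x, LinearMap.congr_fun hf x⟩
  · simp_all

end Module

namespace Mixed

variable {N : ℕ} {m n : ℕ} (a : Fin (m + 1)) (b : Fin (n + 1))

theorem trMap_insMap (s : Tens N m n) : trMap N m n a b (insMap N m n a b s) = (N : ℂ) • s := by
  funext i j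
  simp [trMap, insMap]

theorem insMap_injective (hN : 0 < N) : Function.Injective (insMap N m n a b) := by
  intro s s' h
  funext i j
  have := congrFun (congrFun h (a.insertNth ⟨0, hN⟩ i)) (b.insertNth ⟨0, hN⟩ j)
  simpa [insMap] using this

theorem tau_mul_self : tau N m n a b * tau N m n a b = (N : ℂ) • tau N m n a b := by
  refine LinearMap.ext fun t => ?_
  simp [tau, trMap_insMap]

theorem ker_tau (hN : 0 < N) : LinearMap.ker (tau N m n a b) = LinearMap.ker (trMap N m n a b) :=
  LinearMap.ker_comp_of_ker_eq_bot _ (LinearMap.ker_eq_bot.mpr (insMap_injective a b hN))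

theorem tau_ne_zero (hN : 0 < N) : tau N m n a b ≠ 0 := by
  intro h
  have := LinearMap.congr_fun h (insMap N m n a b fun _ _ => 1)
  simp only [tau, LinearMap.comp_apply, trMap_insMap, map_smul, LinearMap.zero_apply,
    smul_eq_zero, Nat.cast_eq_zero] at this
  rcases this with hN0 | hins
  · omega
  · have hone := insMap_injective a b hN (hins.trans (map_zero _).symm)
    simpa using congrFun (congrFun hone fun _ => ⟨0, hN⟩) fun _ => ⟨0, hN⟩

theorem tau_zero_apply (t : Tens N 2 1) (i : Fin 2 → Fin N) (j : Fin 1 → Fin N) :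
    tau N 1 0 0 0 t i j = if i 0 = j 0 then ∑ k : Fin N, t ![k, i 1] ![k] else 0 := by
  simp only [tau, insMap, trMap, LinearMap.comp_apply, LinearMap.coe_mk, AddHom.coe_mk]
  congr 1
  refine Finset.sum_congr rfl fun k _ => ?_
  congr 1
  · funext x; fin_cases x <;> simp [Fin.insertNth, Fin.succAbove, Fin.succAboveCases]
  · funext y; fin_cases y; simp [Fin.insertNth]

theorem tau_one_apply (t : Tens N 2 1) (i : Fin 2 → Fin N) (j : Fin 1 → Fin N) :
    tau N 1 0 1 0 t i j = if i 1 = j 0 then ∑ k : Fin N, t ![i 0, k] ![k] else 0 := by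
  simp only [tau, insMap, trMap, LinearMap.comp_apply, LinearMap.coe_mk, AddHom.coe_mk]
  congr 1
  refine Finset.sum_congr rfl fun k _ => ?_
  congr 1
  · funext x; fin_cases x <;> simp [Fin.insertNth, Fin.succAbove, Fin.succAboveCases]
  · funext y; fin_cases y; simp [Fin.insertNth]

theorem tau_zero_mul_tau_one_mul_tau_zero :
    tau N 1 0 0 0 * tau N 1 0 1 0 * tau N 1 0 0 0 = tau N 1 0 0 0 := by
  refine LinearMap.ext fun t => funext fun i => funext fun j => ?_
  simp only [Module.End.mul_apply]
  rw [tau_zero_apply, tau_zero_apply]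
  by_cases h : i 0 = j 0 <;> simp [h, tau_one_apply, tau_zero_apply]

theorem tau_one_mul_tau_zero_mul_tau_one :
    tau N 1 0 1 0 * tau N 1 0 0 0 * tau N 1 0 1 0 = tau N 1 0 1 0 := by
  refine LinearMap.ext fun t => funext fun i => funext fun j => ?_
  simp only [Module.End.mul_apply]
  rw [tau_one_apply, tau_one_apply]
  by_cases h : i 1 = j 0 <;> simp [h, tau_one_apply, tau_zero_apply]

theorem isTemperleyLiebPair_tau :
    IsTemperleyLiebPair (N : ℂ) (tau N 1 0 0 0) (tau N 1 0 1 0) :=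
  ⟨tau_mul_self 0 0, tau_mul_self 1 0, tau_zero_mul_tau_one_mul_tau_zero,
    tau_one_mul_tau_zero_mul_tau_one⟩

theorem AOp_one_zero : AOp N 1 0 = tau N 1 0 0 0 + tau N 1 0 1 0 := by
  simp [AOp, Fin.sum_univ_two]

theorem traceless_one_zero (hN : 0 < N) :
    traceless N 1 0 = LinearMap.ker (tau N 1 0 0 0) ⊓ LinearMap.ker (tau N 1 0 1 0) := by
  ext t
  simp [traceless, Fin.forall_fin_two, ker_tau _ _ hN]

theorem traceless_ne_bot (hN : 2 ≤ N) : traceless N m n ≠ ⊥ := by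
  set z : Fin N := ⟨0, by omega⟩
  set o : Fin N := ⟨1, hN⟩
  have hzo : z ≠ o := by simp [z, o, Fin.ext_iff]
  let w : Tens N (m + 1) (n + 1) := fun x y =>
    if x = (fun _ => z) ∧ y = (fun _ => o) then 1 else 0
  have hw : w ≠ 0 := fun h => by simpa [w] using congrFun (congrFun h fun _ => z) fun _ => o
  refine (Submodule.ne_bot_iff _).mpr ⟨w, ?_, hw⟩
  simp only [traceless, Submodule.mem_iInf, LinearMap.mem_ker]
  intro a b
  funext i j
  change ∑ k : Fin N, w (a.insertNth k i) (b.insertNth k j) = 0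
  refine Finset.sum_eq_zero fun k _ => if_neg ?_
  rintro ⟨hx, hy⟩
  apply hzo
  have hxa := congrFun hx a
  have hyb := congrFun hy b
  simp only [Fin.insertNth_apply_same] at hxa hyb
  exact hxa.symm.trans hyb

end Mixed

/-- for dim V = N ≥ 2, the spectrum of 𝒜_{2,1} = τ_{11'} + τ_{21'} on
V ⊗ V ⊗ V* is {0, N−1, N+1}, and 𝒫_{2,1} = (1 − 𝒜/(N−1))(1 − 𝒜/(N+1)) is the
projector onto the subspace of tensors with both partial traces zero. -/
theorem spec_A21 (N : ℕ) (hN : 2 ≤ N) :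
    spectrum ℂ (Mixed.AOp N 1 0) = {0, (N : ℂ) - 1, (N : ℂ) + 1} ∧
    (IsIdempotentElem
        ((1 - ((N : ℂ) - 1)⁻¹ • Mixed.AOp N 1 0) *
          (1 - ((N : ℂ) + 1)⁻¹ • Mixed.AOp N 1 0)) ∧
      LinearMap.range
        ((1 - ((N : ℂ) - 1)⁻¹ • Mixed.AOp N 1 0) *
          (1 - ((N : ℂ) + 1)⁻¹ • Mixed.AOp N 1 0)) = Mixed.traceless N 1 0) := by
  have h₁ : (N : ℂ) - 1 ≠ 0 := sub_ne_zero.mpr (by exact_mod_cast (by omega : N ≠ 1))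
  have h₂ : (N : ℂ) + 1 ≠ 0 := by exact_mod_cast N.succ_ne_zero
  have hpair := Mixed.isTemperleyLiebPair_tau (N := N)
  have hrange : LinearMap.range (tlProjector (N : ℂ) (Mixed.tau N 1 0 0 0 + Mixed.tau N 1 0 1 0))
      = Mixed.traceless N 1 0 := by
    rw [hpair.range_tlProjector h₁ h₂, Mixed.traceless_one_zero (by omega)]
  have hP : tlProjector (N : ℂ) (Mixed.tau N 1 0 0 0 + Mixed.tau N 1 0 1 0) ≠ 0 := fun h =>
    Mixed.traceless_ne_bot hN (by rw [← hrange, h, LinearMap.range_zero])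
  rw [Mixed.AOp_one_zero]
  exact ⟨hpair.spectrum_add (Mixed.tau_ne_zero 0 0 (by omega)) hP h₁ h₂,
    hpair.isIdempotentElem_tlProjector h₁ h₂, hrange⟩
end
end

section
/- Let N ≥ 2 and let T ∈ V^{2,1} have components symmetric in the two contravariant indices (s^{ij}_k = s^{ji}_k). Then the traceless projection of T is given in components by s^{ij}_k − (1/(N+1))(δ^i_k s^{jp}_p + δ^j_k s^{ip}_p), i.e. the single factor 1 − 𝒜_{2,1}/(N+1) already maps Sym²V ⊗ V* onto its traceless part. -/
open scoped BigOperators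

noncomputable section

-- helpers
lemma ins0 (N : ℕ) (k : Fin N) (i' : Fin 1 → Fin N) :
    Fin.insertNth (0 : Fin 2) k i' = ![k, i' 0] := by
  funext x; fin_cases x <;> simp
lemma ins1 (N : ℕ) (k : Fin N) (i' : Fin 1 → Fin N) :
    Fin.insertNth (1 : Fin 2) k i' = ![i' 0, k] := by
  have h : (1 : Fin 2) = Fin.last 1 := rfl
  rw [h, Fin.insertNth_last']
  funext x; fin_cases x <;> simp [Fin.snoc] <;> congr
lemma insj (N : ℕ) (k : Fin N) (j' : Fin 0 → Fin N) :
    Fin.insertNth (0 : Fin 1) k j' = fun _ => k := by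
  funext x; fin_cases x; simp

lemma tr0_apply (N : ℕ) (T : Tens N 2 1) (i : Fin 1 → Fin N) (j : Fin 0 → Fin N) :
    Mixed.trMap N 1 0 0 0 T i j = ∑ k : Fin N, T ![k, i 0] (fun _ => k) := by
  simp only [Mixed.trMap, LinearMap.coe_mk, AddHom.coe_mk]
  refine Finset.sum_congr rfl fun k _ => by rw [ins0, insj]
lemma tr1_apply (N : ℕ) (T : Tens N 2 1) (i : Fin 1 → Fin N) (j : Fin 0 → Fin N) :
    Mixed.trMap N 1 0 1 0 T i j = ∑ k : Fin N, T ![i 0, k] (fun _ => k) := by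
  simp only [Mixed.trMap, LinearMap.coe_mk, AddHom.coe_mk]
  refine Finset.sum_congr rfl fun k _ => by rw [ins1, insj]
lemma tau0_apply (N : ℕ) (T : Tens N 2 1) (i : Fin 2 → Fin N) (j : Fin 1 → Fin N) :
    Mixed.tau N 1 0 0 0 T i j =
      if i 0 = j 0 then ∑ k : Fin N, T ![k, i 1] (fun _ => k) else 0 := by
  simp only [Mixed.tau, LinearMap.comp_apply, Mixed.insMap, LinearMap.coe_mk, AddHom.coe_mk]
  have h1 : (fun x : Fin 1 => i ((0 : Fin 2).succAbove x)) = fun _ => i 1 := by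
    funext x; fin_cases x; rfl
  rw [h1]
  split
  · rw [tr0_apply]
  · rfl
lemma tau1_apply (N : ℕ) (T : Tens N 2 1) (i : Fin 2 → Fin N) (j : Fin 1 → Fin N) :
    Mixed.tau N 1 0 1 0 T i j =
      if i 1 = j 0 then ∑ k : Fin N, T ![i 0, k] (fun _ => k) else 0 := by
  simp only [Mixed.tau, LinearMap.comp_apply, Mixed.insMap, LinearMap.coe_mk, AddHom.coe_mk]
  have h1 : (fun x : Fin 1 => i ((1 : Fin 2).succAbove x)) = fun _ => i 0 := by
    funext x; fin_cases x; rfl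
  rw [h1]
  split
  · rw [tr1_apply]
  · rfl
lemma AOp_apply (N : ℕ) (T : Tens N 2 1) (i : Fin 2 → Fin N) (j : Fin 1 → Fin N) :
    Mixed.AOp N 1 0 T i j =
      (if i 0 = j 0 then ∑ k : Fin N, T ![k, i 1] (fun _ => k) else 0) +
      (if i 1 = j 0 then ∑ k : Fin N, T ![i 0, k] (fun _ => k) else 0) := by
  rw [Mixed.AOp]
  rw [show (∑ a : Fin 2, ∑ b : Fin 1, Mixed.tau N 1 0 a b) =
    Mixed.tau N 1 0 0 0 + Mixed.tau N 1 0 1 0 by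
      rw [Fin.sum_univ_two]; congr 1 <;> rw [Fin.sum_univ_one]]
  rw [LinearMap.add_apply, Pi.add_apply, Pi.add_apply, tau0_apply, tau1_apply]

/-- for N ≥ 2 and T ∈ V^{2,1} with components symmetric in the two
contravariant indices, the traceless projection of T is obtained by applying the
single factor 1 − 𝒜_{2,1}/(N+1), and is given in components by
s^{ij}_k − (1/(N+1))(δ^i_k s^{jp}_p + δ^j_k s^{ip}_p). -/
theorem traceless_sym21 (N : ℕ) (hN : 2 ≤ N) (T : Tens N 2 1)
    (hsym : ∀ (i : Fin 2 → Fin N) (j : Fin 1 → Fin N),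
      T (i ∘ (Equiv.swap (0 : Fin 2) 1)) j = T i j) :
    ((1 - ((N : ℂ) + 1)⁻¹ • Mixed.AOp N 1 0) T) ∈ Mixed.traceless N 1 0 ∧
    ∀ (i : Fin 2 → Fin N) (j : Fin 1 → Fin N),
      ((1 - ((N : ℂ) + 1)⁻¹ • Mixed.AOp N 1 0) T) i j =
        T i j - ((N : ℂ) + 1)⁻¹ *
          ((if i 0 = j 0 then ∑ k : Fin N, T ![i 1, k] (fun _ => k) else 0) +
            (if i 1 = j 0 then ∑ k : Fin N, T ![i 0, k] (fun _ => k) else 0)) := by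
  
  set c : ℂ := ((N : ℂ) + 1)⁻¹ with hc
  have hne : (N : ℂ) + 1 ≠ 0 := Nat.cast_add_one_ne_zero N
  set S : Fin N → ℂ := fun p => ∑ k : Fin N, T ![p, k] (fun _ => k) with hS
  have hsw : ∀ (a b : Fin N) (j : Fin 1 → Fin N), T ![a, b] j = T ![b, a] j := by
    intro a b j
    have h := hsym ![b, a] j
    have h2 : (![b, a] ∘ (Equiv.swap (0 : Fin 2) 1)) = ![a, b] := by
      funext x; fin_cases x <;> simp
    rwa [h2] at h
  have hX : ∀ (i : Fin 2 → Fin N) (j : Fin 1 → Fin N),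
      ((1 - c • Mixed.AOp N 1 0) T) i j =
        T i j - c * ((if i 0 = j 0 then S (i 1) else 0) +
          (if i 1 = j 0 then S (i 0) else 0)) := by
    intro i j
    simp only [LinearMap.sub_apply, Module.End.one_apply, LinearMap.smul_apply,
      Pi.sub_apply, Pi.smul_apply, smul_eq_mul]
    rw [AOp_apply]
    have hA : (if i 0 = j 0 then ∑ k : Fin N, T ![k, i 1] (fun _ => k) else 0) =
        (if i 0 = j 0 then S (i 1) else 0) := by
      split
      · exact Finset.sum_congr rfl fun k _ => hsw k (i 1) _
      · rfl
    rw [hA]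
  have key : ∀ (p : Fin N),
      ∑ k : Fin N, (T ![p, k] (fun _ => k) - c * (S p + if p = k then S k else 0)) = 0 ∧
      ∑ k : Fin N, (T ![p, k] (fun _ => k) - c * ((if p = k then S k else 0) + S p)) = 0 := by
    intro p
    have h1 : ∑ k : Fin N, T ![p, k] (fun _ => k) = S p := rfl
    have h2 : ∑ k : Fin N, (if p = k then S k else 0) = S p := by
      rw [Finset.sum_ite_eq]; simp
    constructor <;>
    · rw [Finset.sum_sub_distrib, h1, ← Finset.mul_sum, Finset.sum_add_distrib, h2,
        Finset.sum_const, Finset.card_univ, Fintype.card_fin, nsmul_eq_mul]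
      rw [hc]
      field_simp
      ring
  constructor
  · rw [Mixed.traceless]
    refine (Submodule.mem_iInf _).2 fun a => (Submodule.mem_iInf _).2 fun b => ?_
    rw [LinearMap.mem_ker]
    fin_cases a <;> fin_cases b
    · show Mixed.trMap N 1 0 0 0 ((1 - c • Mixed.AOp N 1 0) T) = 0
      funext i j
      rw [tr0_apply]
      have e : ∀ k : Fin N, ((1 - c • Mixed.AOp N 1 0) T) ![k, i 0] (fun _ => k) =
          T ![i 0, k] (fun _ => k) - c * (S (i 0) + if i 0 = k then S k else 0) := by
        intro k
        rw [hX, hsw k (i 0)]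
        simp
      rw [Finset.sum_congr rfl fun k _ => e k]
      exact (key (i 0)).1
    · show Mixed.trMap N 1 0 1 0 ((1 - c • Mixed.AOp N 1 0) T) = 0
      funext i j
      rw [tr1_apply]
      have e : ∀ k : Fin N, ((1 - c • Mixed.AOp N 1 0) T) ![i 0, k] (fun _ => k) =
          T ![i 0, k] (fun _ => k) - c * ((if i 0 = k then S k else 0) + S (i 0)) := by
        intro k
        rw [hX]
        simp
      rw [Finset.sum_congr rfl fun k _ => e k]
      exact (key (i 0)).2
  · intro i j
    exact hX i j
end
end
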